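/- (Convergence of the idealized two-timescale MFC scheme.) Under Assumption (Lip), L_p < |𝒳|c_min, and 0 < φ < φ_max, let (ρ^Q_n)_n and (ρ^μ_n)_n be sequences in (0,1) with ∑_n ρ^Q_n = ∑_n ρ^μ_n = ∞, ∑_n ((ρ^Q_n)² + (ρ^μ_n)²) < ∞, and ρ^Q_n/ρ^μ_n → 0 as n → ∞. Define, from any initial (Q₀,μ₀) ∈ ℝ^{𝒳×𝒜} × Δ(𝒳), the iterates μ_{n+1} = μ_n + ρ^μ_n P₂(Q_n,μ_n) and Q_{n+1} = Q_n + ρ^Q_n T₂(Q_n,μ_n). Then (μ_n, Q_n) converges as n → ∞ to (μ*_{Q*φ}, Q*φ), where μ*_Q denotes the unique fixed point of μ ↦ P^{softmin_φ Q,μ}μ and Q*φ is the unique fixed point of Q ↦ B_{μ*_Q}Q. -/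

import Mathlib

open Finset Filter
open scoped Classical

noncomputable section

variable {X A : Type*}

/-- A probability vector on a finite set. -/
def IsProb [Fintype X] (μ : X → ℝ) : Prop := (∀ x, 0 ≤ μ x) ∧ ∑ x, μ x = 1

/-- ℓ¹ norm of a signed measure / vector on a finite set. -/
def l1 [Fintype X] (μ : X → ℝ) : ℝ := ∑ x, |μ x|

/-- Sup norm of a Q-table. -/
def supQ [Fintype X] [Fintype A] [Nonempty X] [Nonempty A] (Q : X → A → ℝ) : ℝ :=
  Finset.univ.sup' Finset.univ_nonempty (fun xa : X × A => |Q xa.1 xa.2|)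

/-- Minimum of a row of a Q-table (minimum over actions). -/
def minRow [Fintype A] [Nonempty A] (q : A → ℝ) : ℝ :=
  Finset.univ.inf' Finset.univ_nonempty q

/-- The soft-min distribution over actions with parameter φ. -/
def softmin [Fintype A] (φ : ℝ) (z : A → ℝ) (a : A) : ℝ :=
  Real.exp (-φ * z a) / ∑ a', Real.exp (-φ * z a')

/-- The argmin_e policy: uniform over the minimizers, zero elsewhere. -/
def argminE [Fintype A] [Nonempty A] (q : A → ℝ) (a : A) : ℝ :=
  if q a = minRow q then (1 : ℝ) / (Finset.univ.filter fun a' => q a' = minRow q).card else 0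

/-- (P^{π,μ} ν)(x) = ∑_{x'} ν(x') ∑_a π(a|x') p(x|x',a,μ). -/
def Ppush [Fintype X] [Fintype A] (p : X → A → (X → ℝ) → X → ℝ)
    (π : X → A → ℝ) (μ ν : X → ℝ) (x : X) : ℝ :=
  ∑ x', ν x' * ∑ a, π x' a * p x' a μ x

/-- P₂(Q,μ) = P^{softmin_φ Q, μ} μ − μ. -/
def P2 [Fintype X] [Fintype A] (φ : ℝ) (p : X → A → (X → ℝ) → X → ℝ)
    (Q : X → A → ℝ) (μ : X → ℝ) (x : X) : ℝ :=
  Ppush p (fun x' => softmin φ (Q x')) μ μ x - μ x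

/-- The Bellman operator (B_μ Q)(x,a) = f(x,a,μ) + γ ∑_{x'} p(x'|x,a,μ) min_{a'} Q(x',a'). -/
def bell [Fintype X] [Fintype A] [Nonempty A]
    (f : X → A → (X → ℝ) → ℝ) (p : X → A → (X → ℝ) → X → ℝ) (γ : ℝ)
    (μ : X → ℝ) (Q : X → A → ℝ) (x : X) (a : A) : ℝ :=
  f x a μ + γ * ∑ x', p x a μ x' * minRow (Q x')

/-- T₂(Q,μ) = B_μ Q − Q. -/
def T2 [Fintype X] [Fintype A] [Nonempty A]
    (f : X → A → (X → ℝ) → ℝ) (p : X → A → (X → ℝ) → X → ℝ) (γ : ℝ)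
    (Q : X → A → ℝ) (μ : X → ℝ) (x : X) (a : A) : ℝ :=
  bell f p γ μ Q x a - Q x a

/-!
For frozen `Q`, one population step `μ ↦ P^{softmin_φ Q, μ} μ` is an ℓ¹-contraction with rate
`c = |𝒳| c_min - L_p` (Dobrushin's coefficient, degraded by the μ-dependence of the kernel), and
softmin is `φ`-Lipschitz, so `Q ↦ μ*_Q` is `L = φ|𝒜|/c`-Lipschitz. Hence
`a_n = ‖μ_n - μ*_{Q_n}‖₁` obeys `a_{n+1} ≤ (1 - c ρ^μ_n) a_n + O(ρ^Q_n)`, and `a_n → 0` because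
`ρ^Q_n / ρ^μ_n → 0`. The Bellman operator is a `γ`-contraction, so `b_n = ‖Q_n - Q*_φ‖_∞` obeys
`b_{n+1} ≤ (1 - (1 - γ) ρ^Q_n) b_n + ρ^Q_n K (a_n + L b_n)` with `K = L_f + γ L_p ‖Q*_φ‖_∞`;
the condition `φ < φ_max` makes `K L < 1 - γ`, and then `b_n → 0` as well.
-/

open Topology Function

section L1

variable {ι : Type*} [Fintype ι]

lemma l1_nonneg (u : ι → ℝ) : 0 ≤ l1 u :=
  sum_nonneg fun _ _ => abs_nonneg _

lemma abs_le_l1 (u : ι → ℝ) (i : ι) : |u i| ≤ l1 u :=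
  single_le_sum (f := fun j => |u j|) (fun _ _ => abs_nonneg _) (mem_univ i)

lemma l1_sub_le_add (u v w : ι → ℝ) : l1 (u - w) ≤ l1 (u - v) + l1 (v - w) := by
  simp only [l1, Pi.sub_apply, ← sum_add_distrib]
  exact sum_le_sum fun i _ => abs_sub_le _ _ _

lemma abs_one_sub_mul_add_mul_le {ρ : ℝ} (hρ0 : 0 ≤ ρ) (hρ1 : ρ ≤ 1) (s t : ℝ) :
    |(1 - ρ) * s + ρ * t| ≤ (1 - ρ) * |s| + ρ * |t| := by
  calc |(1 - ρ) * s + ρ * t| ≤ |(1 - ρ) * s| + |ρ * t| := abs_add_le _ _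
    _ = (1 - ρ) * |s| + ρ * |t| := by
      rw [abs_mul, abs_mul, abs_of_nonneg (sub_nonneg.2 hρ1), abs_of_nonneg hρ0]

lemma l1_one_sub_mul_add_mul_le {ρ : ℝ} (hρ0 : 0 ≤ ρ) (hρ1 : ρ ≤ 1) (u v : ι → ℝ) :
    l1 (fun i => (1 - ρ) * u i + ρ * v i) ≤ (1 - ρ) * l1 u + ρ * l1 v := by
  simp only [l1, mul_sum, ← sum_add_distrib]
  exact sum_le_sum fun i _ => abs_one_sub_mul_add_mul_le hρ0 hρ1 _ _

lemma abs_sum_mul_le_l1_mul {d g : ι → ℝ} {M : ℝ} (hg : ∀ i, |g i| ≤ M) :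
    |∑ i, d i * g i| ≤ l1 d * M := by
  rw [l1, sum_mul]
  refine (abs_sum_le_sum_abs _ _).trans (sum_le_sum fun i _ => ?_)
  rw [abs_mul]
  exact mul_le_mul_of_nonneg_left (hg i) (abs_nonneg _)

lemma sum_abs_sum_mul_le {κ : Type*} [Fintype κ] (c : ι → ℝ) (g : ι → κ → ℝ) :
    ∑ k, |∑ i, c i * g i k| ≤ ∑ i, |c i| * l1 (g i) := by
  calc ∑ k, |∑ i, c i * g i k| ≤ ∑ k, ∑ i, |c i| * |g i k| :=
        sum_le_sum fun k _ => (abs_sum_le_sum_abs _ _).trans_eq (by simp only [abs_mul])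
    _ = ∑ i, |c i| * l1 (g i) := by rw [sum_comm]; simp only [l1, mul_sum]

lemma IsProb.l1_eq_one {w : ι → ℝ} (hw : IsProb w) : l1 w = 1 := by
  rw [l1, ← hw.2]
  exact sum_congr rfl fun i _ => abs_of_nonneg (hw.1 i)

lemma IsProb.one_sub_mul_add_mul {u v : ι → ℝ} (hu : IsProb u) (hv : IsProb v) {ρ : ℝ}
    (hρ0 : 0 ≤ ρ) (hρ1 : ρ ≤ 1) : IsProb (fun i => (1 - ρ) * u i + ρ * v i) := by
  refine ⟨fun i => ?_, ?_⟩
  · have := hu.1 i; have := hv.1 i; have : 0 ≤ 1 - ρ := by linarith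
    positivity
  · rw [sum_add_distrib, ← mul_sum, ← mul_sum, hu.2, hv.2]; ring

lemma IsProb.sum_mul {κ : Type*} [Fintype κ] {w : ι → ℝ} {g : ι → κ → ℝ} (hw : IsProb w)
    (hg : ∀ i, IsProb (g i)) : IsProb (fun k => ∑ i, w i * g i k) := by
  refine ⟨fun k => sum_nonneg fun i _ => mul_nonneg (hw.1 i) ((hg i).1 k), ?_⟩
  rw [sum_comm]
  simp only [← mul_sum, (hg _).2, mul_one, hw.2]

lemma l1_sum_mul_le_of_isProb {κ : Type*} [Fintype κ] {w : ι → ℝ} {g : ι → κ → ℝ} {D : ℝ}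
    (hw : IsProb w) (hg : ∀ i, l1 (g i) ≤ D) : l1 (fun k => ∑ i, w i * g i k) ≤ D := by
  calc l1 (fun k => ∑ i, w i * g i k) ≤ ∑ i, |w i| * l1 (g i) := sum_abs_sum_mul_le w g
    _ ≤ ∑ i, w i * D := sum_le_sum fun i _ => by
        rw [abs_of_nonneg (hw.1 i)]; exact mul_le_mul_of_nonneg_left (hg i) (hw.1 i)
    _ = D := by rw [← sum_mul, hw.2, one_mul]

/-- Dobrushin's estimate: as `∑ d = 0`, the kernel `K` may be replaced by `K - c ≥ 0`, whose rows
have mass `1 - |ι| c`. -/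
lemma l1_sum_mul_le_of_sum_eq_zero {K : ι → ι → ℝ} {c : ℝ} (hK : ∀ i j, c ≤ K i j)
    (hK1 : ∀ i, ∑ j, K i j = 1) {d : ι → ℝ} (hd : ∑ i, d i = 0) :
    l1 (fun j => ∑ i, d i * K i j) ≤ (1 - Fintype.card ι * c) * l1 d := by
  have hshift : ∀ j, ∑ i, d i * K i j = ∑ i, d i * (K i j - c) := fun j => by
    simp only [mul_sub, sum_sub_distrib, ← sum_mul, hd, zero_mul, sub_zero]
  have hrow : ∀ i, l1 (fun j => K i j - c) = 1 - Fintype.card ι * c := fun i => by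
    simp only [l1, fun j => abs_of_nonneg (sub_nonneg.2 (hK i j)), sum_sub_distrib, hK1,
      sum_const, card_univ, nsmul_eq_mul]
  calc l1 (fun j => ∑ i, d i * K i j) = ∑ j, |∑ i, d i * (K i j - c)| := by simp only [l1, hshift]
    _ ≤ ∑ i, |d i| * l1 (fun j => K i j - c) := sum_abs_sum_mul_le d _
    _ = (1 - Fintype.card ι * c) * l1 d := by
      rw [l1, mul_sum]; exact sum_congr rfl fun i _ => by rw [hrow, mul_comm]

lemma IsProb.card_mul_le_one {w : ι → ℝ} (hw : IsProb w) {c : ℝ} (hc : ∀ i, c ≤ w i) :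
    Fintype.card ι * c ≤ 1 := by
  calc Fintype.card ι * c = ∑ _i : ι, c := by rw [sum_const, Finset.card_univ, nsmul_eq_mul]
    _ ≤ ∑ i, w i := sum_le_sum fun i _ => hc i
    _ = 1 := hw.2

lemma tendsto_of_l1_sub_le {u : ℕ → ι → ℝ} {v : ι → ℝ} {e : ℕ → ℝ} (he : Tendsto e atTop (𝓝 0))
    (h : ∀ n, l1 (u n - v) ≤ e n) : Tendsto u atTop (𝓝 v) :=
  tendsto_pi_nhds.2 fun x => tendsto_iff_norm_sub_tendsto_zero.2 <|
    squeeze_zero (fun _ => norm_nonneg _) (fun n => (abs_le_l1 (u n - v) x).trans (h n)) he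

end L1

section Softmin

variable [Fintype A] {φ : ℝ}

lemma isProb_softmin [Nonempty A] (φ : ℝ) (z : A → ℝ) : IsProb (softmin φ z) := by
  have hS : 0 < ∑ a, Real.exp (-φ * z a) := sum_pos (fun _ _ => Real.exp_pos _) univ_nonempty
  refine ⟨fun a => by unfold softmin; positivity, ?_⟩
  simp only [softmin, ← sum_div, div_self hS.ne']

lemma two_mul_abs_exp_sub_exp_le {r : ℝ} (hr : 0 ≤ r) (y y' : ℝ) :
    2 * r * |Real.exp y - Real.exp y'| ≤ |y - y'| * ((r + Real.exp y) * (r + Real.exp y')) := by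
  wlog h : y' ≤ y generalizing y y'
  · rw [abs_sub_comm, abs_sub_comm y, mul_comm (r + _)]
    exact this y' y (le_of_not_ge h)
  set e := Real.exp ((y' - y) / 2)
  have hy' : Real.exp y' = Real.exp y * (e * e) := by rw [← Real.exp_add, ← Real.exp_add]; ring_nf
  have he0 : 0 ≤ e := (Real.exp_pos _).le
  have he1 : e ≤ 1 := Real.exp_le_one_iff.2 (by linarith)
  -- after AM-GM, `1 - e ≤ (y - y') / 2` is all that is left
  have hlin : 0 ≤ (y - y') * (1 + e) - 2 * (1 - e) := by
    nlinarith [Real.add_one_le_exp ((y' - y) / 2)]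
  have hp := (Real.exp_pos y).le
  have hee : e * e ≤ 1 := mul_le_one₀ he1 he0 he1
  rw [hy', abs_of_nonneg (by nlinarith), abs_of_nonneg (by linarith)]
  nlinarith [mul_nonneg (sub_nonneg.2 h) (sq_nonneg (r - Real.exp y * e)),
    mul_nonneg (mul_nonneg (mul_nonneg hr hp) (by positivity : (0:ℝ) ≤ 1 + e)) hlin]

lemma l1_softmin_sub_update_le (hφ : 0 ≤ φ) (w : A → ℝ) (b : A) (t : ℝ) :
    l1 (softmin φ w - softmin φ (update w b t)) ≤ φ * |w b - t| := by
  classical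
  set u := fun a => Real.exp (-φ * w a)
  set q := Real.exp (-φ * t)
  set r := ∑ a ∈ univ.erase b, u a
  have hr : 0 ≤ r := sum_nonneg fun _ _ => (Real.exp_pos _).le
  have hu : (fun a => Real.exp (-φ * update w b t a)) = update u b q := by
    funext a; by_cases h : a = b <;> simp [h, u, q]
  have hS : ∑ a, u a = r + u b := by rw [← add_sum_erase _ _ (mem_univ b), add_comm]
  have hS' : ∑ a, update u b q a = r + q := by
    rw [← add_sum_erase _ _ (mem_univ b), update_self, add_comm,
      sum_congr rfl fun a ha => update_of_ne (ne_of_mem_erase ha) _ _]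
  have hpos : 0 < (r + u b) * (r + q) := by positivity
  have hσ : ∀ a, (softmin φ w - softmin φ (update w b t)) a
      = u a / (r + u b) - update u b q a / (r + q) := fun a => by
    show u a / ∑ a', u a'
      - Real.exp (-φ * update w b t a) / ∑ a', Real.exp (-φ * update w b t a') = _
    simp only [congrFun hu, hS, hS']
  have hother : ∀ a ∈ univ.erase b, |(softmin φ w - softmin φ (update w b t)) a|
      = u a * |q - u b| / ((r + u b) * (r + q)) := fun a ha => by
    rw [hσ, update_of_ne (ne_of_mem_erase ha), div_sub_div _ _ (by positivity) (by positivity),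
      abs_div, abs_of_pos hpos, show u a * (r + q) - (r + u b) * u a = u a * (q - u b) by ring,
      abs_mul, abs_of_pos (show 0 < u a from Real.exp_pos _)]
  have hself : |(softmin φ w - softmin φ (update w b t)) b|
      = r * |u b - q| / ((r + u b) * (r + q)) := by
    rw [hσ, update_self, div_sub_div _ _ (by positivity) (by positivity), abs_div, abs_of_pos hpos,
      show u b * (r + q) - (r + u b) * q = r * (u b - q) by ring, abs_mul, abs_of_nonneg hr]
  have hsum : l1 (softmin φ w - softmin φ (update w b t))
      = 2 * r * |u b - q| / ((r + u b) * (r + q)) := by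
    rw [l1, ← add_sum_erase _ _ (mem_univ b), hself, sum_congr rfl hother, ← sum_div, ← sum_mul,
      abs_sub_comm q]
    ring
  rw [hsum, div_le_iff₀ hpos]
  calc 2 * r * |u b - q| ≤ |-φ * w b - -φ * t| * ((r + u b) * (r + q)) :=
        two_mul_abs_exp_sub_exp_le hr _ _
    _ = φ * |w b - t| * ((r + u b) * (r + q)) := by
      rw [show -φ * w b - -φ * t = φ * (t - w b) by ring, abs_mul, abs_of_nonneg hφ, abs_sub_comm]

lemma l1_softmin_sub_le (hφ : 0 ≤ φ) (z z' : A → ℝ) :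
    l1 (softmin φ z - softmin φ z') ≤ φ * l1 (z - z') := by
  classical
  suffices h : ∀ s : Finset A,
      l1 (softmin φ z - softmin φ (s.piecewise z' z)) ≤ φ * ∑ a ∈ s, |z a - z' a| by
    simpa only [piecewise_univ, l1, Pi.sub_apply] using h univ
  intro s
  induction s using Finset.induction_on with
  | empty => simp [l1]
  | insert b s hb ih =>
    rw [piecewise_insert, sum_insert hb, mul_add, add_comm]
    refine (l1_sub_le_add _ (softmin φ (s.piecewise z' z)) _).trans (add_le_add ih ?_)
    simpa only [piecewise_eq_of_notMem _ _ _ hb] using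
      l1_softmin_sub_update_le hφ (s.piecewise z' z) b (z' b)

end Softmin

section SupNorm

lemma abs_minRow_sub_minRow_le [Fintype A] [Nonempty A] {q q' : A → ℝ} {M : ℝ}
    (h : ∀ a, |q a - q' a| ≤ M) :
    |minRow q - minRow q'| ≤ M := by
  have key : ∀ q q' : A → ℝ, (∀ a, |q a - q' a| ≤ M) → minRow q ≤ minRow q' + M := by
    intro q q' h
    obtain ⟨a, -, ha⟩ := exists_mem_eq_inf' univ_nonempty q'
    calc minRow q ≤ q a := inf'_le _ (mem_univ a)
      _ ≤ minRow q' + M := by rw [minRow, ha]; linarith [(abs_le.1 (h a)).2]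
  have h₁ := key q q' h
  have h₂ := key q' q fun a => abs_sub_comm (q' a) (q a) ▸ h a
  exact abs_sub_le_iff.2 ⟨by linarith, by linarith⟩

variable [Fintype X] [Fintype A] [Nonempty X] [Nonempty A]

lemma abs_le_supQ (Q : X → A → ℝ) (x : X) (a : A) : |Q x a| ≤ supQ Q :=
  le_sup' (fun xa : X × A => |Q xa.1 xa.2|) (mem_univ (x, a))

lemma supQ_nonneg (Q : X → A → ℝ) : 0 ≤ supQ Q :=
  (abs_nonneg _).trans (abs_le_supQ Q (Classical.arbitrary X) (Classical.arbitrary A))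

lemma supQ_le {Q : X → A → ℝ} {M : ℝ} (h : ∀ x a, |Q x a| ≤ M) : supQ Q ≤ M :=
  sup'_le _ _ fun xa _ => h xa.1 xa.2

lemma supQ_sub_self (Q : X → A → ℝ) : supQ (Q - Q) = 0 :=
  le_antisymm (supQ_le fun x a => by simp) (supQ_nonneg _)

lemma l1_le_card_mul_supQ (Q : X → A → ℝ) (x : X) : l1 (Q x) ≤ Fintype.card A * supQ Q := by
  calc l1 (Q x) ≤ ∑ _a : A, supQ Q := sum_le_sum fun a _ => abs_le_supQ Q x a
    _ = Fintype.card A * supQ Q := by rw [sum_const, Finset.card_univ, nsmul_eq_mul]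

lemma abs_minRow_le_supQ (Q : X → A → ℝ) (x : X) : |minRow (Q x)| ≤ supQ Q := by
  simpa [minRow] using abs_minRow_sub_minRow_le (q' := fun _ : A => 0) fun a => by
    simpa using abs_le_supQ Q x a

lemma abs_minRow_sub_minRow_le_supQ (Q Q' : X → A → ℝ) (x : X) :
    |minRow (Q x) - minRow (Q' x)| ≤ supQ (Q - Q') :=
  abs_minRow_sub_minRow_le fun a => abs_le_supQ (Q - Q') x a

end SupNorm

section Push

variable [Fintype X] [Fintype A] {p : X → A → (X → ℝ) → X → ℝ}
  {π π' : X → A → ℝ} {μ μ' ν ν' : X → ℝ}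

lemma isProb_Ppush (hp : ∀ x a, IsProb (p x a μ)) (hπ : ∀ x, IsProb (π x)) (hν : IsProb ν) :
    IsProb (Ppush p π μ ν) :=
  hν.sum_mul fun x => (hπ x).sum_mul (hp x)

lemma l1_Ppush_sub_Ppush_le_of_sum_eq {c : ℝ} (hp : ∀ x a, IsProb (p x a μ))
    (hc : ∀ x a y, c ≤ p x a μ y) (hπ : ∀ x, IsProb (π x)) (hνν' : ∑ x, ν x = ∑ x, ν' x) :
    l1 (Ppush p π μ ν - Ppush p π μ ν') ≤ (1 - Fintype.card X * c) * l1 (ν - ν') := by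
  have hK : ∀ x y, c ≤ ∑ a, π x a * p x a μ y := fun x y =>
    calc c = ∑ a, π x a * c := by rw [← sum_mul, (hπ x).2, one_mul]
      _ ≤ ∑ a, π x a * p x a μ y :=
        sum_le_sum fun a _ => mul_le_mul_of_nonneg_left (hc x a y) ((hπ x).1 a)
  have h := l1_sum_mul_le_of_sum_eq_zero hK (fun x => ((hπ x).sum_mul (hp x)).2)
    (d := ν - ν') (by simp only [Pi.sub_apply, sum_sub_distrib, hνν', sub_self])
  convert h using 3 with y
  simp only [Ppush, Pi.sub_apply, sub_mul, sum_sub_distrib]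

lemma l1_Ppush_sub_Ppush_le_of_kernel {κ : X → ℝ} {D : ℝ} (hπ : ∀ x, IsProb (π x)) (hκ : IsProb κ)
    (hD : ∀ x a, l1 (p x a μ - p x a μ') ≤ D) :
    l1 (Ppush p π μ κ - Ppush p π μ' κ) ≤ D := by
  have h := l1_sum_mul_le_of_isProb hκ fun x => l1_sum_mul_le_of_isProb (hπ x) (hD x)
  convert h using 3 with y
  simp only [Ppush, Pi.sub_apply, ← sum_sub_distrib, ← mul_sub]

lemma l1_Ppush_sub_Ppush_le_of_policy {κ : X → ℝ} {D : ℝ} (hp : ∀ x a, IsProb (p x a μ))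
    (hκ : IsProb κ) (hD : ∀ x, l1 (π x - π' x) ≤ D) :
    l1 (Ppush p π μ κ - Ppush p π' μ κ) ≤ D := by
  have h := l1_sum_mul_le_of_isProb hκ fun x =>
    (sum_abs_sum_mul_le (π x - π' x) (p x · μ)).trans_eq
      (by simp only [(hp x _).l1_eq_one, mul_one]; rfl) |>.trans (hD x)
  convert h using 3 with y
  simp only [Ppush, Pi.sub_apply, ← sum_sub_distrib, ← mul_sub, sub_mul]

end Push

section PopulationStep

variable [Fintype X] [Fintype A]
  {p : X → A → (X → ℝ) → X → ℝ} {φ cmin Lp ρ : ℝ} {μ ν m : X → ℝ}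

/-- `μ ↦ P^{softmin_φ Q, μ} μ`; `μ*_Q` is its fixed point. -/
def popStep (φ : ℝ) (p : X → A → (X → ℝ) → X → ℝ) (Q : X → A → ℝ) (μ : X → ℝ) : X → ℝ :=
  Ppush p (fun x => softmin φ (Q x)) μ μ

def muStep (φ ρ : ℝ) (p : X → A → (X → ℝ) → X → ℝ) (Q : X → A → ℝ) (μ : X → ℝ) : X → ℝ :=
  fun x => μ x + ρ * P2 φ p Q μ x

lemma muStep_eq (Q : X → A → ℝ) :
    muStep φ ρ p Q μ = fun x => (1 - ρ) * μ x + ρ * popStep φ p Q μ x := by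
  funext x
  simp only [muStep, P2, popStep]
  ring

variable [Nonempty A]

lemma IsProb.muStep (hp : ∀ x a μ, IsProb μ → IsProb (p x a μ)) (hμ : IsProb μ) (hρ0 : 0 ≤ ρ)
    (hρ1 : ρ ≤ 1) (Q : X → A → ℝ) : IsProb (muStep φ ρ p Q μ) := by
  rw [muStep_eq]
  exact hμ.one_sub_mul_add_mul (isProb_Ppush (hp · · μ hμ) (fun x => isProb_softmin φ (Q x)) hμ)
    hρ0 hρ1

variable [Nonempty X]

lemma l1_popStep_sub_popStep_le (hp : ∀ x a μ, IsProb μ → IsProb (p x a μ))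
    (hcmin : ∀ x a μ x', IsProb μ → cmin ≤ p x a μ x')
    (hLp : ∀ x a μ μ', IsProb μ → IsProb μ' →
      ∑ x', |p x a μ x' - p x a μ' x'| ≤ Lp * l1 (fun y => μ y - μ' y))
    (hφ : 0 ≤ φ) (hμ : IsProb μ) (hν : IsProb ν) (Q Q' : X → A → ℝ) :
    l1 (popStep φ p Q μ - popStep φ p Q' ν)
      ≤ (1 - Fintype.card X * cmin + Lp) * l1 (μ - ν) + φ * Fintype.card A * supQ (Q - Q') := by
  set π := fun x => softmin φ (Q x)
  have hπ : ∀ x, IsProb (π x) := fun x => isProb_softmin φ (Q x)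
  have h₁ := l1_Ppush_sub_Ppush_le_of_sum_eq (ν := μ) (ν' := ν) (hp · · μ hμ)
    (fun x a y => hcmin x a μ y hμ) hπ (hμ.2.trans hν.2.symm)
  have h₂ : l1 (Ppush p π μ ν - Ppush p π ν ν) ≤ Lp * l1 (μ - ν) :=
    l1_Ppush_sub_Ppush_le_of_kernel hπ hν fun x a => hLp x a μ ν hμ hν
  have h₃ : l1 (Ppush p π ν ν - popStep φ p Q' ν) ≤ φ * Fintype.card A * supQ (Q - Q') :=
    l1_Ppush_sub_Ppush_le_of_policy (hp · · ν hν) hν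
      fun x => (l1_softmin_sub_le hφ (Q x) (Q' x)).trans <| by
        rw [mul_assoc]; exact mul_le_mul_of_nonneg_left (l1_le_card_mul_supQ (Q - Q') x) hφ
  calc l1 (popStep φ p Q μ - popStep φ p Q' ν)
      ≤ l1 (Ppush p π μ μ - Ppush p π μ ν) + (l1 (Ppush p π μ ν - Ppush p π ν ν)
        + l1 (Ppush p π ν ν - popStep φ p Q' ν)) :=
      (l1_sub_le_add _ _ _).trans (add_le_add le_rfl (l1_sub_le_add _ _ _))
    _ ≤ _ := by linarith

lemma l1_sub_le_of_isFixedPt (hp : ∀ x a μ, IsProb μ → IsProb (p x a μ))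
    (hcmin : ∀ x a μ x', IsProb μ → cmin ≤ p x a μ x')
    (hLp : ∀ x a μ μ', IsProb μ → IsProb μ' →
      ∑ x', |p x a μ x' - p x a μ' x'| ≤ Lp * l1 (fun y => μ y - μ' y))
    (hφ : 0 ≤ φ) (hc : 0 < Fintype.card X * cmin - Lp) {Q Q' : X → A → ℝ} {m' : X → ℝ}
    (hm : IsProb m) (hm' : IsProb m') (hfix : IsFixedPt (popStep φ p Q) m)
    (hfix' : IsFixedPt (popStep φ p Q') m') :
    l1 (m - m') ≤ φ * Fintype.card A / (Fintype.card X * cmin - Lp) * supQ (Q - Q') := by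
  have h := l1_popStep_sub_popStep_le hp hcmin hLp hφ hm hm' Q Q'
  rw [hfix.eq, hfix'.eq] at h
  rw [div_mul_eq_mul_div, le_div_iff₀ hc]
  linarith

lemma l1_muStep_sub_le (hp : ∀ x a μ, IsProb μ → IsProb (p x a μ))
    (hcmin : ∀ x a μ x', IsProb μ → cmin ≤ p x a μ x')
    (hLp : ∀ x a μ μ', IsProb μ → IsProb μ' →
      ∑ x', |p x a μ x' - p x a μ' x'| ≤ Lp * l1 (fun y => μ y - μ' y))
    (hφ : 0 ≤ φ) {Q : X → A → ℝ} (hμ : IsProb μ) (hm : IsProb m)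
    (hfix : IsFixedPt (popStep φ p Q) m) (hρ0 : 0 ≤ ρ) (hρ1 : ρ ≤ 1) :
    l1 (muStep φ ρ p Q μ - m) ≤ (1 - (Fintype.card X * cmin - Lp) * ρ) * l1 (μ - m) := by
  have h := l1_popStep_sub_popStep_le hp hcmin hLp hφ hμ hm Q Q
  rw [hfix.eq, supQ_sub_self, mul_zero, add_zero] at h
  have hstep : muStep φ ρ p Q μ - m
      = fun x => (1 - ρ) * (μ - m) x + ρ * (popStep φ p Q μ - m) x := by
    rw [muStep_eq]; funext x; simp only [Pi.sub_apply]; ring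
  rw [hstep]
  refine (l1_one_sub_mul_add_mul_le hρ0 hρ1 _ _).trans ?_
  linarith [mul_le_mul_of_nonneg_left h hρ0]

lemma l1_muStep_sub_le_of_lipschitz (hp : ∀ x a μ, IsProb μ → IsProb (p x a μ))
    (hcmin : ∀ x a μ x', IsProb μ → cmin ≤ p x a μ x')
    (hLp : ∀ x a μ μ', IsProb μ → IsProb μ' →
      ∑ x', |p x a μ x' - p x a μ' x'| ≤ Lp * l1 (fun y => μ y - μ' y))
    (hφ : 0 ≤ φ) {mstar : (X → A → ℝ) → X → ℝ}
    (hmstar : ∀ Q, IsProb (mstar Q) ∧ IsFixedPt (popStep φ p Q) (mstar Q)) {L : ℝ}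
    (hLip : ∀ Q Q', l1 (mstar Q - mstar Q') ≤ L * supQ (Q - Q')) (hμ : IsProb μ) (hρ0 : 0 ≤ ρ)
    (hρ1 : ρ ≤ 1) (Q Q' : X → A → ℝ) :
    l1 (muStep φ ρ p Q μ - mstar Q')
      ≤ (1 - (Fintype.card X * cmin - Lp) * ρ) * l1 (μ - mstar Q) + L * supQ (Q - Q') :=
  (l1_sub_le_add _ (mstar Q) _).trans <| add_le_add
    (l1_muStep_sub_le hp hcmin hLp hφ hμ (hmstar Q).1 (hmstar Q).2 hρ0 hρ1) (hLip Q Q')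

end PopulationStep

section Bellman

variable [Fintype X] [Fintype A] [Nonempty A]
  {f : X → A → (X → ℝ) → ℝ} {p : X → A → (X → ℝ) → X → ℝ} {γ ρ fnorm M : ℝ} {μ μ' : X → ℝ}
  {Q Q' : X → A → ℝ}

def qStep (f : X → A → (X → ℝ) → ℝ) (p : X → A → (X → ℝ) → X → ℝ) (γ ρ : ℝ) (Q : X → A → ℝ)
    (μ : X → ℝ) : X → A → ℝ :=
  fun x a => Q x a + ρ * T2 f p γ Q μ x a

lemma qStep_apply (x : X) (a : A) :
    qStep f p γ ρ Q μ x a = (1 - ρ) * Q x a + ρ * bell f p γ μ Q x a := by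
  simp only [qStep, T2]
  ring

variable [Nonempty X]

lemma abs_bell_le (hγ : 0 ≤ γ) (hp : ∀ x a, IsProb (p x a μ)) (Q : X → A → ℝ) (x : X) (a : A) :
    |bell f p γ μ Q x a| ≤ |f x a μ| + γ * supQ Q := by
  refine (abs_add_le _ _).trans (add_le_add le_rfl ?_)
  rw [abs_mul, abs_of_nonneg hγ]
  refine mul_le_mul_of_nonneg_left ?_ hγ
  simpa only [(hp x a).l1_eq_one, one_mul] using
    abs_sum_mul_le_l1_mul (d := p x a μ) (abs_minRow_le_supQ Q)

lemma abs_bell_sub_bell_le (hγ : 0 ≤ γ) (hp : ∀ x a, IsProb (p x a μ)) (x : X) (a : A) :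
    |bell f p γ μ Q x a - bell f p γ μ' Q' x a|
      ≤ |f x a μ - f x a μ'| + γ * (supQ (Q - Q') + l1 (p x a μ - p x a μ') * supQ Q') := by
  have e : bell f p γ μ Q x a - bell f p γ μ' Q' x a = (f x a μ - f x a μ')
      + γ * (∑ y, p x a μ y * (minRow (Q y) - minRow (Q' y))
        + ∑ y, (p x a μ - p x a μ') y * minRow (Q' y)) := by
    simp only [bell, Pi.sub_apply, mul_sub, sub_mul, sum_sub_distrib]
    ring
  rw [e]
  refine (abs_add_le _ _).trans (add_le_add le_rfl ?_)
  rw [abs_mul, abs_of_nonneg hγ]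
  refine mul_le_mul_of_nonneg_left ((abs_add_le _ _).trans (add_le_add ?_ ?_)) hγ
  · simpa only [(hp x a).l1_eq_one, one_mul] using
      abs_sum_mul_le_l1_mul (d := p x a μ) (abs_minRow_sub_minRow_le_supQ Q Q')
  · exact abs_sum_mul_le_l1_mul (abs_minRow_le_supQ Q')

lemma supQ_qStep_le (hγ : 0 ≤ γ) (hp : ∀ x a, IsProb (p x a μ))
    (hf : ∀ x a, |f x a μ| ≤ fnorm) (hρ0 : 0 ≤ ρ) (hρ1 : ρ ≤ 1) (hQ : supQ Q ≤ M)
    (hM : fnorm + γ * M ≤ M) : supQ (qStep f p γ ρ Q μ) ≤ M :=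
  supQ_le fun x a => by
    have hbell : |bell f p γ μ Q x a| ≤ fnorm + γ * M :=
      (abs_bell_le hγ hp Q x a).trans (add_le_add (hf x a) (mul_le_mul_of_nonneg_left hQ hγ))
    rw [qStep_apply]
    refine (abs_one_sub_mul_add_mul_le hρ0 hρ1 _ _).trans ?_
    nlinarith [abs_le_supQ Q x a]

lemma supQ_sub_qStep_le (hγ : 0 ≤ γ) (hp : ∀ x a, IsProb (p x a μ))
    (hf : ∀ x a, |f x a μ| ≤ fnorm) (hρ0 : 0 ≤ ρ) (hQ : supQ Q ≤ M)
    (hM : fnorm + γ * M ≤ M) : supQ (Q - qStep f p γ ρ Q μ) ≤ ρ * (2 * M) :=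
  supQ_le fun x a => by
    have hbell : |bell f p γ μ Q x a| ≤ fnorm + γ * M :=
      (abs_bell_le hγ hp Q x a).trans (add_le_add (hf x a) (mul_le_mul_of_nonneg_left hQ hγ))
    rw [Pi.sub_apply, Pi.sub_apply, qStep_apply,
      show Q x a - ((1 - ρ) * Q x a + ρ * bell f p γ μ Q x a) = ρ * (Q x a - bell f p γ μ Q x a)
        by ring, abs_mul, abs_of_nonneg hρ0]
    refine mul_le_mul_of_nonneg_left ((abs_sub _ _).trans ?_) hρ0
    linarith [abs_le_supQ Q x a]

lemma supQ_qStep_sub_le (hγ : 0 ≤ γ) (hp : ∀ x a, IsProb (p x a μ)) (hρ0 : 0 ≤ ρ) (hρ1 : ρ ≤ 1)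
    (hfix : bell f p γ μ' Q' = Q') {F P : ℝ} (hF : ∀ x a, |f x a μ - f x a μ'| ≤ F)
    (hP : ∀ x a, l1 (p x a μ - p x a μ') ≤ P) :
    supQ (qStep f p γ ρ Q μ - Q')
      ≤ (1 - (1 - γ) * ρ) * supQ (Q - Q') + ρ * (F + γ * P * supQ Q') :=
  supQ_le fun x a => by
    have hfix' : bell f p γ μ' Q' x a = Q' x a := congrFun (congrFun hfix x) a
    have hB : |bell f p γ μ Q x a - bell f p γ μ' Q' x a| ≤ F + γ * (supQ (Q - Q') + P * supQ Q') :=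
      (abs_bell_sub_bell_le hγ hp x a).trans (add_le_add (hF x a) (mul_le_mul_of_nonneg_left
        (add_le_add le_rfl (mul_le_mul_of_nonneg_right (hP x a) (supQ_nonneg Q'))) hγ))
    rw [Pi.sub_apply, Pi.sub_apply, qStep_apply,
      show (1 - ρ) * Q x a + ρ * bell f p γ μ Q x a - Q' x a
        = (1 - ρ) * (Q x a - Q' x a) + ρ * (bell f p γ μ Q x a - bell f p γ μ' Q' x a) by
        rw [hfix']; ring]
    calc _ ≤ (1 - ρ) * |Q x a - Q' x a| + ρ * |bell f p γ μ Q x a - bell f p γ μ' Q' x a| :=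
          abs_one_sub_mul_add_mul_le hρ0 hρ1 _ _
      _ ≤ (1 - ρ) * supQ (Q - Q') + ρ * (F + γ * (supQ (Q - Q') + P * supQ Q')) :=
          add_le_add (mul_le_mul_of_nonneg_left (abs_le_supQ (Q - Q') x a) (by linarith))
            (mul_le_mul_of_nonneg_left hB hρ0)
      _ = _ := by ring

lemma supQ_qStep_sub_le_of_l1_le (hγ : 0 ≤ γ) (hp : ∀ x a μ, IsProb μ → IsProb (p x a μ))
    {Lf Lp : ℝ} (hLf : ∀ x a μ μ', IsProb μ → IsProb μ' →
      |f x a μ - f x a μ'| ≤ Lf * l1 (fun y => μ y - μ' y))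
    (hLp : ∀ x a μ μ', IsProb μ → IsProb μ' →
      ∑ x', |p x a μ x' - p x a μ' x'| ≤ Lp * l1 (fun y => μ y - μ' y))
    (hρ0 : 0 ≤ ρ) (hρ1 : ρ ≤ 1) (hμ : IsProb μ) (hμ' : IsProb μ') (hfix : bell f p γ μ' Q' = Q')
    (hK : 0 ≤ Lf + γ * Lp * supQ Q') {d : ℝ} (hd : l1 (μ - μ') ≤ d) :
    supQ (qStep f p γ ρ Q μ - Q')
      ≤ (1 - (1 - γ) * ρ) * supQ (Q - Q') + ρ * ((Lf + γ * Lp * supQ Q') * d) := by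
  refine (supQ_qStep_sub_le hγ (hp · · μ hμ) hρ0 hρ1 hfix (F := Lf * l1 (μ - μ'))
    (P := Lp * l1 (μ - μ')) (fun x a => hLf x a _ _ hμ hμ') (fun x a => hLp x a _ _ hμ hμ')).trans
    (add_le_add le_rfl (mul_le_mul_of_nonneg_left ?_ hρ0))
  calc _ = (Lf + γ * Lp * supQ Q') * l1 (μ - μ') := by ring
    _ ≤ _ := mul_le_mul_of_nonneg_left hd hK

end Bellman

section Recursions

lemma tendsto_prod_one_sub_of_not_summable {a : ℕ → ℝ} (h0 : ∀ n, 0 ≤ a n) (h1 : ∀ n, a n ≤ 1)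
    (h : ¬ Summable a) : Tendsto (fun n => ∏ i ∈ range n, (1 - a i)) atTop (𝓝 0) := by
  have hsum := (not_summable_iff_tendsto_nat_atTop_of_nonneg h0).1 h
  refine squeeze_zero (fun n => prod_nonneg fun i _ => sub_nonneg.2 (h1 i)) (fun n => ?_)
    (Real.tendsto_exp_atBot.comp (tendsto_neg_atTop_atBot.comp hsum))
  calc ∏ i ∈ range n, (1 - a i) ≤ ∏ i ∈ range n, Real.exp (-a i) :=
        prod_le_prod (fun i _ => sub_nonneg.2 (h1 i)) fun i _ => by
          linarith [Real.add_one_le_exp (-a i)]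
    _ = Real.exp (-∑ i ∈ range n, a i) := by rw [← Real.exp_sum, sum_neg_distrib]

lemma tendsto_zero_of_le_one_sub_mul_add {x α ε : ℕ → ℝ} {c : ℝ} (hc : 0 < c)
    (hx : ∀ n, 0 ≤ x n) (hα : ∀ n, 0 ≤ α n ∧ c * α n ≤ 1) (hα_div : ¬ Summable α)
    (hε : Tendsto ε atTop (𝓝 0)) (hrec : ∀ n, x (n + 1) ≤ (1 - c * α n) * x n + α n * ε n) :
    Tendsto x atTop (𝓝 0) := by
  refine tendsto_order.2 ⟨fun b hb => Eventually.of_forall fun n => hb.trans_le (hx n),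
    fun b hb => ?_⟩
  obtain ⟨N, hN⟩ :=
    eventually_atTop.1 (hε.eventually (gt_mem_nhds (by positivity : 0 < c * (b / 2))))
  set P := fun m => ∏ i ∈ range m, (1 - c * α (N + i))
  have hbound : ∀ m, x (N + m) ≤ b / 2 + x N * P m := by
    intro m
    induction m with
    | zero => simp [P]; positivity
    | succ m ih =>
      have h1 : 0 ≤ 1 - c * α (N + m) := sub_nonneg.2 (hα _).2
      have h2 := mul_le_mul_of_nonneg_left (hN (N + m) le_self_add).le (hα (N + m)).1
      calc x (N + (m + 1)) ≤ (1 - c * α (N + m)) * x (N + m) + α (N + m) * ε (N + m) := hrec _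
        _ ≤ (1 - c * α (N + m)) * (b / 2 + x N * P m) + α (N + m) * (c * (b / 2)) := by
          gcongr
        _ = b / 2 + x N * P (m + 1) := by simp only [P, prod_range_succ]; ring
  have hP : Tendsto (fun m => x N * P m) atTop (𝓝 0) := by
    have hsum : ¬ Summable fun i => c * α (N + i) := by
      simp_rw [add_comm N]
      rwa [summable_mul_left_iff hc.ne', summable_nat_add_iff]
    simpa using (tendsto_prod_one_sub_of_not_summable (fun i => mul_nonneg hc.le (hα _).1)
      (fun i => (hα _).2) hsum).const_mul (x N)
  obtain ⟨M, hM⟩ := eventually_atTop.1 (hP.eventually (gt_mem_nhds (half_pos hb)))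
  refine eventually_atTop.2 ⟨N + M, fun n hn => ?_⟩
  obtain ⟨k, rfl⟩ := Nat.exists_eq_add_of_le (le_trans le_self_add hn)
  have := hM k (by omega)
  linarith [hbound k]

lemma two_timescale_tendsto_zero {a b α β : ℕ → ℝ} {c κ K L D : ℝ} (hc : 0 < c) (hc1 : c ≤ 1)
    (hκ1 : κ ≤ 1) (hK : 0 ≤ K) (hL : 0 ≤ L) (hKL : K * L < κ)
    (ha : ∀ n, 0 ≤ a n) (hb : ∀ n, 0 ≤ b n)
    (hα : ∀ n, 0 < α n ∧ α n ≤ 1) (hβ : ∀ n, 0 ≤ β n ∧ β n ≤ 1)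
    (hα_div : ¬ Summable α) (hβ_div : ¬ Summable β)
    (hβα : Tendsto (fun n => β n / α n) atTop (𝓝 0))
    (hrec_a : ∀ n, a (n + 1) ≤ (1 - c * α n) * a n + D * β n)
    (hrec_b : ∀ n, b (n + 1) ≤ (1 - κ * β n) * b n + β n * (K * (a n + L * b n))) :
    Tendsto a atTop (𝓝 0) ∧ Tendsto b atTop (𝓝 0) := by
  have ha0 : Tendsto a atTop (𝓝 0) := by
    refine tendsto_zero_of_le_one_sub_mul_add hc ha
      (fun n => ⟨(hα n).1.le, mul_le_one₀ hc1 (hα n).1.le (hα n).2⟩) hα_div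
      (by simpa using hβα.const_mul D) fun n => ?_
    rw [show α n * (D * (β n / α n)) = D * β n by field_simp [(hα n).1.ne']]
    exact hrec_a n
  refine ⟨ha0, tendsto_zero_of_le_one_sub_mul_add (sub_pos.2 hKL) hb
    (fun n => ⟨(hβ n).1, ?_⟩) hβ_div (by simpa using ha0.const_mul K) fun n => ?_⟩
  · nlinarith [(hβ n).1, (hβ n).2, mul_nonneg hK hL, mul_nonneg (mul_nonneg hK hL) (hβ n).1]
  · linarith [hrec_b n]

end Recursions

section Scheme

variable [Fintype X] [Fintype A] [Nonempty A]
  {f : X → A → (X → ℝ) → ℝ} {p : X → A → (X → ℝ) → X → ℝ} {φ γ fnorm M : ℝ}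
  {ρ : ℕ → ℝ} {μ : ℕ → X → ℝ} {Q : ℕ → X → A → ℝ}

lemma isProb_of_muStep_iterate (hp : ∀ x a μ, IsProb μ → IsProb (p x a μ))
    (hρ : ∀ n, 0 ≤ ρ n ∧ ρ n ≤ 1) (h0 : IsProb (μ 0))
    (hrec : ∀ n, μ (n + 1) = muStep φ (ρ n) p (Q n) (μ n)) : ∀ n, IsProb (μ n)
  | 0 => h0
  | n + 1 => hrec n ▸ (isProb_of_muStep_iterate hp hρ h0 hrec n).muStep hp (hρ n).1 (hρ n).2 (Q n)

variable [Nonempty X]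

lemma exists_supQ_qStep_iterate_le (hγ0 : 0 ≤ γ) (hγ1 : γ < 1)
    (hp : ∀ x a μ, IsProb μ → IsProb (p x a μ)) (hf : ∀ x a μ, IsProb μ → |f x a μ| ≤ fnorm)
    (hρ : ∀ n, 0 ≤ ρ n ∧ ρ n ≤ 1) (hμ : ∀ n, IsProb (μ n))
    (hrec : ∀ n, Q (n + 1) = qStep f p γ (ρ n) (Q n) (μ n)) :
    ∃ M, fnorm + γ * M ≤ M ∧ ∀ n, supQ (Q n) ≤ M := by
  set M := max (supQ (Q 0)) (fnorm / (1 - γ))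
  have hM : fnorm + γ * M ≤ M := by
    have := (div_le_iff₀ (by linarith)).1 (le_max_right (supQ (Q 0)) (fnorm / (1 - γ)))
    linarith
  refine ⟨M, hM, fun n => ?_⟩
  induction n with
  | zero => exact le_max_left _ _
  | succ n ih =>
    rw [hrec n]
    exact supQ_qStep_le hγ0 (hp · · _ (hμ n)) (hf · · _ (hμ n)) (hρ n).1 (hρ n).2 ih hM

lemma tendsto_of_supQ_sub_tendsto_zero {Q' : X → A → ℝ}
    (h : Tendsto (fun n => supQ (Q n - Q')) atTop (𝓝 0)) : Tendsto Q atTop (𝓝 Q') :=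
  tendsto_pi_nhds.2 fun x => tendsto_pi_nhds.2 fun a => tendsto_iff_norm_sub_tendsto_zero.2 <|
    squeeze_zero (fun _ => norm_nonneg _) (fun n => abs_le_supQ (Q n - Q') x a) h

end Scheme

/-- The condition `φ < φ_max` as it is used, with `n = |𝒜|`, `c = |𝒳| c_min - L_p` and
`‖Q*_φ‖_∞ ≤ S`: the left side is the coupling `K L` between the two timescales, where
`L = φ|𝒜|/c` is the Lipschitz constant of `Q ↦ μ*_Q`. -/
lemma mul_lt_one_sub_of_lt_phiMax {φ γ n c Lf Lp fnorm S : ℝ} (hφ : 0 < φ) (hn : 0 < n)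
    (hc : 0 < c) (hγ0 : 0 ≤ γ) (hLf : 0 ≤ Lf) (hLp : 0 ≤ Lp) (hS : 0 ≤ S)
    (hSf : S ≤ fnorm / (1 - γ)) (h : φ < c / n * ((1 - γ) / (Lf + γ / (1 - γ) * Lp * fnorm))) :
    (Lf + γ * Lp * S) * (φ * n / c) < 1 - γ := by
  have hK : Lf + γ * Lp * S ≤ Lf + γ / (1 - γ) * Lp * fnorm := by
    have := mul_le_mul_of_nonneg_left hSf (mul_nonneg hγ0 hLp)
    rw [show γ / (1 - γ) * Lp * fnorm = γ * Lp * (fnorm / (1 - γ)) by ring]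
    linarith
  rcases ((by positivity : 0 ≤ Lf + γ * Lp * S).trans hK).eq_or_lt with hB | hB
  · rw [← hB, div_zero, mul_zero] at h
    linarith
  rw [div_mul_div_comm, lt_div_iff₀ (by positivity)] at h
  calc (Lf + γ * Lp * S) * (φ * n / c) ≤ (Lf + γ / (1 - γ) * Lp * fnorm) * (φ * n / c) :=
        mul_le_mul_of_nonneg_right hK (by positivity)
    _ < 1 - γ := by rw [← mul_div_assoc, div_lt_iff₀ hc]; linarith

theorem mfc_two_timescale_convergence_general [Fintype X] [Fintype A] [Nonempty X] [Nonempty A]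
    (γ : ℝ) (hγ0 : 0 < γ) (hγ1 : γ < 1)
    (f : X → A → (X → ℝ) → ℝ) (fnorm : ℝ)
    (hf : ∀ x a μ, IsProb μ → |f x a μ| ≤ fnorm)
    (p : X → A → (X → ℝ) → X → ℝ)
    (hp0 : ∀ x a μ x', IsProb μ → 0 ≤ p x a μ x')
    (hp1 : ∀ x a μ, IsProb μ → ∑ x', p x a μ x' = 1)
    (cmin Lf Lp : ℝ)
    (hcmin : ∀ x a μ x', IsProb μ → cmin ≤ p x a μ x')
    (hLf0 : 0 ≤ Lf) (hLp0 : 0 ≤ Lp)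
    (hLf : ∀ x a μ μ', IsProb μ → IsProb μ' →
      |f x a μ - f x a μ'| ≤ Lf * l1 (fun y => μ y - μ' y))
    (hLp : ∀ x a μ μ', IsProb μ → IsProb μ' →
      ∑ x', |p x a μ x' - p x a μ' x'| ≤ Lp * l1 (fun y => μ y - μ' y))
    (hLpc : Lp < (Fintype.card X : ℝ) * cmin)
    (φ : ℝ) (hφ0 : 0 < φ)
    (hφmax : φ < ((Fintype.card X : ℝ) * cmin - Lp) / (Fintype.card A : ℝ)
        * ((1 - γ) / (Lf + (γ / (1 - γ)) * Lp * fnorm)))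
    -- μ*_Q : the unique fixed point of μ ↦ P^{softmin_φ Q, μ} μ
    (mustar : (X → A → ℝ) → X → ℝ)
    (hmustar : ∀ Q : X → A → ℝ, IsProb (mustar Q) ∧
      Ppush p (fun x' => softmin φ (Q x')) (mustar Q) (mustar Q) = mustar Q)
    -- Q*φ : the unique fixed point of Q ↦ B_{μ*_Q} Q
    (Qstarφ : X → A → ℝ) (hQball : supQ Qstarφ ≤ fnorm / (1 - γ))
    (hQfix : bell f p γ (mustar Qstarφ) Qstarφ = Qstarφ)
    -- learning rates
    (ρQ ρμ : ℕ → ℝ)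
    (hρQ : ∀ n, 0 < ρQ n ∧ ρQ n < 1) (hρμ : ∀ n, 0 < ρμ n ∧ ρμ n < 1)
    (hdivQ : ¬ Summable ρQ) (hdivμ : ¬ Summable ρμ)
    (hratio : Filter.Tendsto (fun n => ρQ n / ρμ n) Filter.atTop (nhds 0))
    -- the iterates
    (μseq : ℕ → X → ℝ) (Qseq : ℕ → X → A → ℝ)
    (hμ0 : IsProb (μseq 0))
    (hμrec : ∀ n, μseq (n + 1) = fun x => μseq n x + ρμ n * P2 φ p (Qseq n) (μseq n) x)
    (hQrec : ∀ n, Qseq (n + 1) = fun x a => Qseq n x a + ρQ n * T2 f p γ (Qseq n) (μseq n) x a) :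
    Filter.Tendsto μseq Filter.atTop (nhds (mustar Qstarφ))
      ∧ Filter.Tendsto Qseq Filter.atTop (nhds Qstarφ) := by
  have hp : ∀ x a μ, IsProb μ → IsProb (p x a μ) := fun x a μ hμ =>
    ⟨(hp0 x a μ · hμ), hp1 x a μ hμ⟩
  set c := (Fintype.card X : ℝ) * cmin - Lp
  set L := φ * Fintype.card A / c
  set K := Lf + γ * Lp * supQ Qstarφ
  have hc : 0 < c := sub_pos.2 hLpc
  have hc1 : c ≤ 1 := by
    linarith [(hp _ (Classical.arbitrary A) _ hμ0).card_mul_le_one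
      (hcmin (Classical.arbitrary X) _ _ · hμ0)]
  have hL : 0 ≤ L := by positivity
  have hK : 0 ≤ K := by have := supQ_nonneg Qstarφ; positivity
  have hKL : K * L < 1 - γ := mul_lt_one_sub_of_lt_phiMax hφ0 (by positivity) hc hγ0.le hLf0
    hLp0 (supQ_nonneg _) hQball hφmax
  have hLip : ∀ Q Q', l1 (mustar Q - mustar Q') ≤ L * supQ (Q - Q') := fun Q Q' =>
    l1_sub_le_of_isFixedPt hp hcmin hLp hφ0.le hc (hmustar Q).1 (hmustar Q').1 (hmustar Q).2
      (hmustar Q').2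
  have hμ := isProb_of_muStep_iterate hp (fun n => ⟨(hρμ n).1.le, (hρμ n).2.le⟩) hμ0 hμrec
  obtain ⟨M, hM, hQ⟩ := exists_supQ_qStep_iterate_le hγ0.le hγ1 hp hf
    (fun n => ⟨(hρQ n).1.le, (hρQ n).2.le⟩) hμ hQrec
  have hdist : ∀ n, l1 (μseq n - mustar Qstarφ)
      ≤ l1 (μseq n - mustar (Qseq n)) + L * supQ (Qseq n - Qstarφ) := fun n =>
    (l1_sub_le_add _ _ _).trans (add_le_add le_rfl (hLip _ _))
  have hμstep : ∀ n, μseq (n + 1) = muStep φ (ρμ n) p (Qseq n) (μseq n) := hμrec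
  have hQstep : ∀ n, Qseq (n + 1) = qStep f p γ (ρQ n) (Qseq n) (μseq n) := hQrec
  have hrecA : ∀ n, l1 (μseq (n + 1) - mustar (Qseq (n + 1)))
      ≤ (1 - c * ρμ n) * l1 (μseq n - mustar (Qseq n)) + L * (2 * M) * ρQ n := fun n => by
    rw [hμstep, hQstep]
    refine (l1_muStep_sub_le_of_lipschitz hp hcmin hLp hφ0.le hmustar hLip (hμ n) (hρμ n).1.le
      (hρμ n).2.le _ _).trans ?_
    nlinarith [mul_le_mul_of_nonneg_left (supQ_sub_qStep_le hγ0.le (hp · · _ (hμ n))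
      (hf · · _ (hμ n)) (hρQ n).1.le (hQ n) hM) hL]
  have hrecB : ∀ n, supQ (Qseq (n + 1) - Qstarφ) ≤ (1 - (1 - γ) * ρQ n) * supQ (Qseq n - Qstarφ)
      + ρQ n * (K * (l1 (μseq n - mustar (Qseq n)) + L * supQ (Qseq n - Qstarφ))) := fun n =>
    hQstep n ▸ supQ_qStep_sub_le_of_l1_le hγ0.le hp hLf hLp (hρQ n).1.le (hρQ n).2.le (hμ n)
      (hmustar Qstarφ).1 hQfix hK (hdist n)
  obtain ⟨ha, hb⟩ := two_timescale_tendsto_zero (a := fun n => l1 (μseq n - mustar (Qseq n)))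
    (b := fun n => supQ (Qseq n - Qstarφ)) hc hc1 (by linarith) hK hL hKL
    (fun n => l1_nonneg _) (fun n => supQ_nonneg _) (fun n => ⟨(hρμ n).1, (hρμ n).2.le⟩)
    (fun n => ⟨(hρQ n).1.le, (hρQ n).2.le⟩) hdivμ hdivQ hratio hrecA hrecB
  exact ⟨tendsto_of_l1_sub_le (by simpa using ha.add (hb.const_mul L)) hdist,
    tendsto_of_supQ_sub_tendsto_zero hb⟩

/-- convergence of the idealized two-timescale MFC scheme
(Q faster to 0, i.e. ρ^Q_n/ρ^μ_n → 0) to (μ*_{Q*φ}, Q*φ). -/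
theorem mfc_two_timescale_convergence [Fintype X] [Fintype A] [Nonempty X] [Nonempty A]
    (γ : ℝ) (hγ0 : 0 < γ) (hγ1 : γ < 1)
    (f : X → A → (X → ℝ) → ℝ) (fnorm : ℝ)
    (hf : ∀ x a μ, IsProb μ → |f x a μ| ≤ fnorm)
    (p : X → A → (X → ℝ) → X → ℝ)
    (hp0 : ∀ x a μ x', IsProb μ → 0 ≤ p x a μ x')
    (hp1 : ∀ x a μ, IsProb μ → ∑ x', p x a μ x' = 1)
    (cmin Lf Lp : ℝ) (hcmin0 : 0 ≤ cmin)
    (hcmin : ∀ x a μ x', IsProb μ → cmin ≤ p x a μ x')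
    (hLf0 : 0 ≤ Lf) (hLp0 : 0 ≤ Lp)
    (hLf : ∀ x a μ μ', IsProb μ → IsProb μ' →
      |f x a μ - f x a μ'| ≤ Lf * l1 (fun y => μ y - μ' y))
    (hLp : ∀ x a μ μ', IsProb μ → IsProb μ' →
      ∑ x', |p x a μ x' - p x a μ' x'| ≤ Lp * l1 (fun y => μ y - μ' y))
    (hLpc : Lp < (Fintype.card X : ℝ) * cmin)
    (φ : ℝ) (hφ0 : 0 < φ)
    (hφmax : φ < ((Fintype.card X : ℝ) * cmin - Lp) / (Fintype.card A : ℝ)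
        * ((1 - γ) / (Lf + (γ / (1 - γ)) * Lp * fnorm)))
    -- μ*_Q : the unique fixed point of μ ↦ P^{softmin_φ Q, μ} μ
    (mustar : (X → A → ℝ) → X → ℝ)
    (hmustar : ∀ Q : X → A → ℝ, IsProb (mustar Q) ∧
      Ppush p (fun x' => softmin φ (Q x')) (mustar Q) (mustar Q) = mustar Q)
    -- Q*φ : the unique fixed point of Q ↦ B_{μ*_Q} Q
    (Qstarφ : X → A → ℝ) (hQball : supQ Qstarφ ≤ fnorm / (1 - γ))
    (hQfix : bell f p γ (mustar Qstarφ) Qstarφ = Qstarφ)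
    -- learning rates
    (ρQ ρμ : ℕ → ℝ)
    (hρQ : ∀ n, 0 < ρQ n ∧ ρQ n < 1) (hρμ : ∀ n, 0 < ρμ n ∧ ρμ n < 1)
    (hdivQ : ¬ Summable ρQ) (hdivμ : ¬ Summable ρμ)
    (hsq : Summable (fun n => (ρQ n) ^ 2 + (ρμ n) ^ 2))
    (hratio : Filter.Tendsto (fun n => ρQ n / ρμ n) Filter.atTop (nhds 0))
    -- the iterates
    (μseq : ℕ → X → ℝ) (Qseq : ℕ → X → A → ℝ)
    (hμ0 : IsProb (μseq 0))
    (hμrec : ∀ n, μseq (n + 1) = fun x => μseq n x + ρμ n * P2 φ p (Qseq n) (μseq n) x)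
    (hQrec : ∀ n, Qseq (n + 1) = fun x a => Qseq n x a + ρQ n * T2 f p γ (Qseq n) (μseq n) x a) :
    Filter.Tendsto μseq Filter.atTop (nhds (mustar Qstarφ))
      ∧ Filter.Tendsto Qseq Filter.atTop (nhds Qstarφ) :=
  mfc_two_timescale_convergence_general γ hγ0 hγ1 f fnorm hf p hp0 hp1 cmin Lf Lp hcmin hLf0 hLp0
    hLf hLp hLpc φ hφ0 hφmax mustar hmustar Qstarφ hQball hQfix ρQ ρμ hρQ hρμ hdivQ hdivμ hratio
    μseq Qseq hμ0 hμrec hQrec
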